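/- Soundness of the ⊆-distribution rule: for all team-semantic formulas φ, ψ and primitive inclusion atoms x_1 ⊆ a_1, ..., x_n ⊆ a_n, the entailment (φ ∨ ψ) ∧ x_1 ⊆ a_1 ∧ ... ∧ x_n ⊆ a_n ⊨ ((φ ∨ a_1^{x_1} ∨ ... ∨ a_n^{x_n}) ∧ x_1 ⊆ a_1 ∧ ... ∧ x_n ⊆ a_n) ∨ ψ holds over all Kripke models and teams. -/

import Mathlib

structure KModel (W : Type) where
  R : W → W → Prop
  V : ℕ → Set W

inductive MF : Type
  | prop : ℕ → MF
  | bot : MF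
  | neg : MF → MF
  | or : MF → MF → MF
  | and : MF → MF → MF
  | dia : MF → MF
  | box : MF → MF

def MF.top : MF := MF.neg MF.bot

def wSat {W : Type} (M : KModel W) : W → MF → Prop
  | w, .prop p => w ∈ M.V p
  | _, .bot => False
  | w, .neg a => ¬ wSat M w a
  | w, .or a b => wSat M w a ∨ wSat M w b
  | w, .and a b => wSat M w a ∧ wSat M w b
  | w, .dia a => ∃ v, M.R w v ∧ wSat M v a
  | w, .box a => ∀ v, M.R w v → wSat M v a

inductive IncForm : Type
  | prop : ℕ → IncForm
  | bot : IncForm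
  | incl : List MF → List MF → IncForm
  | neg : MF → IncForm
  | or : IncForm → IncForm → IncForm
  | and : IncForm → IncForm → IncForm
  | dia : IncForm → IncForm
  | box : IncForm → IncForm

/-- image R[T] -/
def img {W : Type} (M : KModel W) (T : Set W) : Set W := {v | ∃ w ∈ T, M.R w v}

/-- successor team relation: S ⊆ R[T] and T ⊆ R⁻¹[S] -/
def succTeam {W : Type} (M : KModel W) (T S : Set W) : Prop :=
  (∀ v ∈ S, ∃ w ∈ T, M.R w v) ∧ (∀ w ∈ T, ∃ v ∈ S, M.R w v)

def TSat {W : Type} (M : KModel W) : Set W → IncForm → Prop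
  | T, .prop p => T ⊆ M.V p
  | T, .bot => T = ∅
  | T, .incl as bs => ∀ w ∈ T, ∃ v ∈ T, ∀ i, ∀ (h1 : i < as.length) (h2 : i < bs.length),
      (wSat M w (as.get ⟨i, h1⟩) ↔ wSat M v (bs.get ⟨i, h2⟩))
  | T, .neg a => ∀ w ∈ T, ¬ wSat M w a
  | T, .or f g => ∃ T1 T2, T1 ∪ T2 = T ∧ TSat M T1 f ∧ TSat M T2 g
  | T, .and f g => TSat M T f ∧ TSat M T g
  | T, .dia f => ∃ S, succTeam M T S ∧ TSat M S f
  | T, .box f => TSat M (img M T) f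

/-- embedding of classical formulas into ML(⊆) -/
def toInc : MF → IncForm
  | .prop p => .prop p
  | .bot => .bot
  | .neg a => .neg a
  | .or a b => .or (toInc a) (toInc b)
  | .and a b => .and (toInc a) (toInc b)
  | .dia a => .dia (toInc a)
  | .box a => .box (toInc a)

/-- translate a Boolean constant to ⊤ or ⊥ -/
def ofBool : Bool → MF := fun x => if x then MF.top else MF.bot

/-- α^⊤ = α, α^⊥ = ¬α -/
def signed : Bool → MF → MF := fun x a => if x then a else a.neg

/-- a^x = α₁^{x₁} ∧ ... ∧ αₙ^{xₙ} -/
def conjSigned (xs : List Bool) (as : List MF) : MF :=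
  (List.zipWith signed xs as).foldr MF.and MF.top

/-- conjunction of a finite list of ML(⊆) formulas (empty conjunction is ⊤) -/
def bigAndI (l : List IncForm) : IncForm := l.foldr IncForm.and (.neg MF.bot)

section Aux

variable {W : Type}

lemma tsat_empty (M : KModel W) : ∀ f, TSat M (∅ : Set W) f := by
  intro f
  induction f with
  | prop p => intro w hw; cases hw
  | bot => rfl
  | incl as bs => intro w hw; cases hw
  | neg a => intro w hw; cases hw
  | or f g ihf ihg => exact ⟨∅, ∅, by simp, ihf, ihg⟩
  | and f g ihf ihg => exact ⟨ihf, ihg⟩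
  | dia f ih =>
      refine ⟨∅, ⟨?_, ?_⟩, ih⟩ <;> intro w hw <;> cases hw
  | box f ih =>
      show TSat M (img M (∅ : Set W)) f
      have : img M (∅ : Set W) = ∅ := by
        ext v; simp [img]
      rw [this]; exact ih

lemma flat_sat (M : KModel W) : ∀ (a : MF) (T : Set W),
    (∀ w ∈ T, wSat M w a) → TSat M T (toInc a) := by
  intro a
  induction a with
  | prop p => intro T h; exact h
  | bot => intro T h; ext w; simp only [Set.mem_empty_iff_false, iff_false]; exact fun hw => h w hw
  | neg a ih => intro T h; exact h
  | or a b iha ihb =>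
      intro T h
      refine ⟨{w ∈ T | wSat M w a}, {w ∈ T | wSat M w b}, ?_,
        iha _ (fun w hw => hw.2), ihb _ (fun w hw => hw.2)⟩
      ext w
      constructor
      · rintro (⟨hw, _⟩ | ⟨hw, _⟩) <;> exact hw
      · intro hw
        rcases h w hw with h' | h'
        · exact Or.inl ⟨hw, h'⟩
        · exact Or.inr ⟨hw, h'⟩
  | and a b iha ihb =>
      intro T h
      exact ⟨iha _ fun w hw => (h w hw).1, ihb _ fun w hw => (h w hw).2⟩
  | dia a ih =>
      intro T h
      refine ⟨{v | (∃ w ∈ T, M.R w v) ∧ wSat M v a}, ⟨?_, ?_⟩, ih _ fun v hv => hv.2⟩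
      · exact fun v hv => hv.1
      · intro w hw
        rcases h w hw with ⟨v, hr, hv⟩
        exact ⟨v, ⟨⟨w, hw, hr⟩, hv⟩, hr⟩
  | box a ih =>
      intro T h
      refine ih _ ?_
      rintro v ⟨w, hw, hr⟩
      exact h w hw v hr

lemma wSat_ofBool (M : KModel W) (w : W) (b : Bool) :
    wSat M w (ofBool b) ↔ b = true := by
  cases b <;> simp [ofBool, MF.top, wSat]

lemma wSat_conjSigned (M : KModel W) (v : W) :
    ∀ (xs : List Bool) (as : List MF),
    (∀ k (h1 : k < xs.length) (h2 : k < as.length),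
      (xs.get ⟨k, h1⟩ = true ↔ wSat M v (as.get ⟨k, h2⟩))) →
    wSat M v (conjSigned xs as) := by
  intro xs
  induction xs with
  | nil => intro as h; simp [conjSigned, wSat, MF.top]
  | cons x xs ih =>
    intro as h
    cases as with
    | nil => simp [conjSigned, wSat, MF.top]
    | cons a as =>
      have h0 := h 0 (by simp) (by simp)
      refine ⟨?_, ih as (fun k h1 h2 => h (k+1) (by simpa using h1) (by simpa using h2))⟩
      cases x with
      | true => exact h0.mp rfl
      | false =>
        show ¬ wSat M v a
        intro hv
        exact absurd (h0.mpr hv) (by simp)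

lemma tsat_bigAnd (M : KModel W) (T : Set W) :
    ∀ (l : List IncForm), TSat M T (bigAndI l) ↔ ∀ f ∈ l, TSat M T f := by
  intro l
  induction l with
  | nil =>
      simp only [bigAndI, List.foldr_nil, List.not_mem_nil, false_implies, implies_true, iff_true]
      intro w _ hw
      exact hw
  | cons f l ih =>
      constructor
      · rintro ⟨h1, h2⟩ g hg
        rcases List.mem_cons.mp hg with rfl | hg
        · exact h1
        · exact (ih.mp h2) g hg
      · intro h
        exact ⟨h f (by simp), ih.mpr (fun g hg => h g (by simp [hg]))⟩

lemma tsat_orFold (M : KModel W) (φ : IncForm) :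
    ∀ (l : List (IncForm × W)) (T : Set W), TSat M T φ →
      (∀ p ∈ l, TSat M ({p.2} : Set W) p.1) →
      TSat M (T ∪ {w | ∃ p ∈ l, w = p.2}) ((l.map Prod.fst).foldr IncForm.or φ) := by
  intro l
  induction l with
  | nil =>
      intro T hT _
      have : (T ∪ {w | ∃ p ∈ ([] : List (IncForm × W)), w = p.2}) = T := by
        ext w; simp
      rw [this]
      exact hT
  | cons p l ih =>
      intro T hT hl
      refine ⟨({p.2} : Set W), T ∪ {w | ∃ q ∈ l, w = q.2}, ?_, hl p (by simp),
        ih T hT (fun q hq => hl q (by simp [hq]))⟩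
      ext w
      simp only [Set.mem_union, Set.mem_singleton_iff, Set.mem_setOf_eq, List.mem_cons]
      constructor
      · rintro (rfl | hw | ⟨q, hq, rfl⟩)
        · exact Or.inr ⟨p, Or.inl rfl, rfl⟩
        · exact Or.inl hw
        · exact Or.inr ⟨q, Or.inr hq, rfl⟩
      · rintro (hw | ⟨q, (rfl | hq), rfl⟩)
        · exact Or.inr (Or.inl hw)
        · exact Or.inl rfl
        · exact Or.inr (Or.inr ⟨q, hq, rfl⟩)

end Aux

theorem stmt19 {W : Type} (M : KModel W) (T : Set W) (φ ψ : IncForm) (n : ℕ)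
    (xs : Fin n → List Bool) (as : Fin n → List MF)
    (hlen : ∀ i, (xs i).length = (as i).length)
    (h : TSat M T (.and (.or φ ψ)
          (bigAndI (List.ofFn fun i => .incl ((xs i).map ofBool) (as i))))) :
    TSat M T (.or
      (.and (List.foldr IncForm.or φ (List.ofFn fun i => toInc (conjSigned (xs i) (as i))))
            (bigAndI (List.ofFn fun i => .incl ((xs i).map ofBool) (as i))))
      ψ) := by

  obtain ⟨hor, hincls⟩ := h
  by_cases hT : T = ∅
  · subst hT
    exact ⟨∅, ∅, by simp, ⟨tsat_empty M _, tsat_empty M _⟩, tsat_empty M _⟩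
  · obtain ⟨w0, hw0⟩ := Set.nonempty_iff_ne_empty.mpr hT
    obtain ⟨T1, T2, hun, hφ, hψ⟩ := hor
    have hinc : ∀ i : Fin n, TSat M T (.incl ((xs i).map ofBool) (as i)) := by
      intro i
      exact (tsat_bigAnd M T _).mp hincls _ (List.mem_ofFn.mpr ⟨i, rfl⟩)
    have hwit : ∀ i : Fin n, ∃ v ∈ T, ∀ k (h1 : k < (xs i).length) (h2 : k < (as i).length),
        ((xs i).get ⟨k, h1⟩ = true ↔ wSat M v ((as i).get ⟨k, h2⟩)) := by
      intro i
      obtain ⟨v, hvT, hvp⟩ := hinc i w0 hw0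
      refine ⟨v, hvT, fun k h1 h2 => ?_⟩
      have h1' : k < ((xs i).map ofBool).length := by simpa using h1
      have hcd := hvp k h1' h2
      have e : (((xs i).map ofBool).get ⟨k, h1'⟩) = ofBool ((xs i).get ⟨k, h1⟩) := by
        simp [List.get_eq_getElem]
      rwa [e, wSat_ofBool] at hcd
    choose v hvT hv using hwit
    set l : List (IncForm × W) :=
      List.ofFn (fun i => (toInc (conjSigned (xs i) (as i)), v i)) with hl
    have hsing : ∀ p ∈ l, TSat M ({p.2} : Set W) p.1 := by
      intro p hp
      rw [hl, List.mem_ofFn] at hp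
      obtain ⟨i, rfl⟩ := hp
      refine flat_sat M _ _ ?_
      rintro w rfl
      exact wSat_conjSigned M (v i) _ _ (hv i)
    have hsub : {w | ∃ p ∈ l, w = p.2} ⊆ T := by
      rintro w ⟨p, hp, rfl⟩
      rw [hl, List.mem_ofFn] at hp
      obtain ⟨i, rfl⟩ := hp
      exact hvT i
    have hbigor := tsat_orFold M φ l T1 hφ hsing
    have hmap : l.map Prod.fst = List.ofFn fun i => toInc (conjSigned (xs i) (as i)) := by
      rw [hl, List.map_ofFn]
      rfl
    rw [hmap] at hbigor
    refine ⟨T1 ∪ {w | ∃ p ∈ l, w = p.2}, T2, ?_, ⟨hbigor, ?_⟩, hψ⟩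
    · rw [Set.union_right_comm, hun]
      exact Set.union_eq_left.mpr hsub
    · refine (tsat_bigAnd M _ _).mpr ?_
      intro f hf
      obtain ⟨i, rfl⟩ := List.mem_ofFn.mp hf
      intro w hw
      refine ⟨v i, Or.inr ⟨(toInc (conjSigned (xs i) (as i)), v i),
        by rw [hl]; exact List.mem_ofFn.mpr ⟨i, rfl⟩, rfl⟩, ?_⟩
      intro k h1 h2
      have h1' : k < (xs i).length := by simpa using h1
      have e : (((xs i).map ofBool).get ⟨k, h1⟩) = ofBool ((xs i).get ⟨k, h1'⟩) := by
        simp [List.get_eq_getElem]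
      rw [e, wSat_ofBool]
      exact hv i k h1' h2
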